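/- Let θ ∈ [0,1]^n be thresholds each of which is an integer multiple of ε/2, and let D = D_1×…×D_n be any product distribution on [0,1]^n. Let t_{ε/2} denote the vector obtained from t by rounding each coordinate down to the nearest multiple of ε/2, and let D_{ε/2} denote the corresponding pushforward (discretized) product distribution. Then the expected reward of the threshold strategy satisfies E_{t∼D}[h_θ(t_{ε/2})] ≤ E_{t∼D}[h_θ(t)]; equivalently, h_θ(D_{ε/2}) ≤ h_θ(D). -/

import Mathlib

open MeasureTheory ProbabilityTheory
open scoped NNReal ENNReal

/-- Expected value `h(D) = E_{t∼D}[h(t)]` of a hypothesis under the product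
distribution with marginals `μ i`. -/
noncomputable def expVal {n : ℕ} (h : (Fin n → ℝ) → ℝ) (μ : Fin n → Measure ℝ) : ℝ :=
  ∫ t, h t ∂(Measure.pi μ)

/-- A distribution on `ℝ` supported on `[0,1]`. -/
def SuppIn01 (μ : Measure ℝ) : Prop := μ (Set.Icc (0 : ℝ) 1)ᶜ = 0

/-- `Opt(D) = sup_{h ∈ H} h(D)`. -/
noncomputable def Opt {n : ℕ} (H : Set ((Fin n → ℝ) → ℝ)) (μ : Fin n → Measure ℝ) : ℝ :=
  ⨆ h : H, expVal (h : (Fin n → ℝ) → ℝ) μ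

/-- Coordinatewise first-order stochastic dominance `P ⪰ Q`:
`F_{P_i}(t) ≤ F_{Q_i}(t)` for every `i` and `t`. -/
def StochDom {n : ℕ} (P Q : Fin n → Measure ℝ) : Prop :=
  ∀ (i : Fin n) (t : ℝ), cdf (P i) t ≤ cdf (Q i) t

/-- Strong monotonicity of a problem `H`: for every product distribution `D̃`
(on `[0,1]ⁿ`) there is an optimal hypothesis `h_{D̃}` whose expected value on any
product distribution `D ⪰ D̃` is at least `Opt(D̃)`. -/
def StronglyMonotone {n : ℕ} (H : Set ((Fin n → ℝ) → ℝ)) : Prop :=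
  ∀ Dt : Fin n → Measure ℝ, (∀ i, IsProbabilityMeasure (Dt i)) → (∀ i, SuppIn01 (Dt i)) →
    ∃ h ∈ H, expVal h Dt = Opt H Dt ∧
      ∀ D : Fin n → Measure ℝ, (∀ i, IsProbabilityMeasure (D i)) → (∀ i, SuppIn01 (D i)) →
        StochDom D Dt → Opt H Dt ≤ expVal h D

/-- The marginal empirical measure: the uniform distribution over the `i`-th
coordinates of the samples `s`. -/
noncomputable def empMeas {N n : ℕ} (s : Fin N → Fin n → ℝ) (i : Fin n) : Measure ℝ :=
  ((N : ℝ≥0)⁻¹ : ℝ≥0) • ∑ m : Fin N, Measure.dirac (s m i)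

/-- Expectation of `h` under the *product empirical distribution* `E = E_1 × ⋯ × E_n`
determined by the samples `s` (written directly as a finite average over all
combinations of sample coordinates). -/
noncomputable def empExp {N n : ℕ} (s : Fin N → Fin n → ℝ) (h : (Fin n → ℝ) → ℝ) : ℝ :=
  (∑ m : Fin n → Fin N, h fun i => s (m i) i) / (N ^ n : ℕ)

/-- `Opt(E)` for the product empirical distribution of the samples `s`. -/
noncomputable def empOpt {N n : ℕ} (H : Set ((Fin n → ℝ) → ℝ)) (s : Fin N → Fin n → ℝ) : ℝ :=
  ⨆ h : H, empExp s (h : (Fin n → ℝ) → ℝ)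

/-- The empirical CDF `F_{E_i}(t) = #{m : s_i^{(m)} ≤ t} / N`. -/
noncomputable def empCdf {N n : ℕ} (s : Fin N → Fin n → ℝ) (i : Fin n) (t : ℝ) : ℝ :=
  ((Finset.univ.filter fun m : Fin N => s m i ≤ t).card : ℝ) / N

/-- Total variation distance between two measures. -/
noncomputable def tvDist {α : Type*} [MeasurableSpace α] (P Q : Measure α) : ℝ :=
  ⨆ A : {A : Set α // MeasurableSet A}, ((P A).toReal - (Q A).toReal)

/-- Squared Hellinger distance `H²(P,Q) = 1 − ∫ √(dP/dλ · dQ/dλ) dλ` (`λ = P + Q`). -/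
noncomputable def sqHellinger {α : Type*} [MeasurableSpace α] (P Q : Measure α) : ℝ :=
  1 - ∫ x, Real.sqrt ((P.rnDeriv (P + Q) x).toReal * (Q.rnDeriv (P + Q) x).toReal) ∂(P + Q)

/-- The measure of i.i.d. samples: `N` independent draws from the product
distribution with marginals `μ`. -/
noncomputable def samples (N : ℕ) {n : ℕ} (μ : Fin n → Measure ℝ) :
    Measure (Fin N → Fin n → ℝ) :=
  Measure.pi fun _ : Fin N => Measure.pi μ

/-- The reward of the threshold strategy `θ` on realization `t`, starting from
position `j`: it accepts the first reward `t i ≥ θ i` among positions `i < n−1`,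
and accepts the last reward if it reaches it. -/
noncomputable def prophetAux {n : ℕ} (θ t : Fin n → ℝ) : ℕ → ℝ
  | j =>
    if h : j < n then
      if j = n - 1 then t ⟨j, h⟩
      else if θ ⟨j, h⟩ ≤ t ⟨j, h⟩ then t ⟨j, h⟩
      else prophetAux θ t (j + 1)
    else 0
  termination_by j => n - j
  decreasing_by omega

/-- The reward `h_θ(t)` of the threshold strategy `θ` on realization `t`. -/
noncomputable def prophetReward {n : ℕ} (θ t : Fin n → ℝ) : ℝ := prophetAux θ t 0

/-- The optimal (backward-induction) value of the prophet game on the suffix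
`μ_j × ⋯ × μ_{n−1}`: `V j = E_{x ∼ μ_j}[max(x, V (j+1))]`, `V n = 0`. -/
noncomputable def suffixValue {n : ℕ} (μ : Fin n → Measure ℝ) : ℕ → ℝ
  | j =>
    if h : j < n then ∫ x, max x (suffixValue μ (j + 1)) ∂(μ ⟨j, h⟩)
    else 0
  termination_by j => n - j
  decreasing_by omega

/-- The backward-induction optimal thresholds for the product distribution `μ`:
`θ_{n−1} = 0` and `θ_i` is the optimal expected reward on the suffix after `i`. -/
noncomputable def optThresholds {n : ℕ} (μ : Fin n → Measure ℝ) : Fin n → ℝ :=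
  fun i => if (i : ℕ) = n - 1 then 0 else suffixValue μ ((i : ℕ) + 1)

/-- A nonanticipating stopping rule: its decision depends only on the rewards
observed up to the stopping time. -/
def Nonanticipating {n : ℕ} (τ : (Fin n → ℝ) → Fin n) : Prop :=
  ∀ t t' : Fin n → ℝ, (∀ j : Fin n, j ≤ τ t → t j = t' j) → τ t' = τ t

/-- The optimal expected reward over all (adaptive, nonanticipating) stopping
strategies for the product distribution `μ`. -/
noncomputable def optStopValue {n : ℕ} (μ : Fin n → Measure ℝ) : ℝ :=
  ⨆ τ : {τ : (Fin n → ℝ) → Fin n // Nonanticipating τ},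
    ∫ t, t ((τ : (Fin n → ℝ) → Fin n) t) ∂(Measure.pi μ)

/-- Rounding down to the nearest multiple of `ε/2`. -/
noncomputable def rnd (ε x : ℝ) : ℝ := ⌊x / (ε / 2)⌋ * (ε / 2)

/-!
Rounding down to a multiple of `ε/2` can only lower a reward, and it never changes whether a
reward clears a threshold that is itself a multiple of `ε/2`. Hence on every realization the
strategy stops at the same position on the rounded rewards as on the true ones and collects a
smaller reward there; integrating this pointwise inequality gives the claim.
-/

open Set

section Rounding

variable {ε : ℝ}

lemma rnd_le (hε : 0 < ε) (x : ℝ) : rnd ε x ≤ x := by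
  have hε2 : 0 < ε / 2 := half_pos hε
  calc rnd ε x ≤ x / (ε / 2) * (ε / 2) := by
        unfold rnd; gcongr; exact Int.floor_le _
    _ = x := div_mul_cancel₀ x hε2.ne'

lemma rnd_nonneg (hε : 0 < ε) {x : ℝ} (hx : 0 ≤ x) : 0 ≤ rnd ε x := by
  have hε2 : 0 < ε / 2 := half_pos hε
  unfold rnd
  have : (0 : ℝ) ≤ ⌊x / (ε / 2)⌋ := mod_cast Int.floor_nonneg.2 (div_nonneg hx hε2.le)
  positivity

lemma rnd_mem_Icc (hε : 0 < ε) {x : ℝ} (hx : x ∈ Icc (0 : ℝ) 1) : rnd ε x ∈ Icc (0 : ℝ) 1 :=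
  ⟨rnd_nonneg hε hx.1, (rnd_le hε x).trans hx.2⟩

lemma intCast_mul_le_rnd_iff (hε : 0 < ε) (z : ℤ) (x : ℝ) :
    z * (ε / 2) ≤ rnd ε x ↔ z * (ε / 2) ≤ x := by
  have hε2 : 0 < ε / 2 := half_pos hε
  rw [rnd, mul_le_mul_iff_left₀ hε2, Int.cast_le, Int.le_floor, le_div_iff₀ hε2]

lemma measurable_rnd (ε : ℝ) : Measurable (rnd ε) := by
  unfold rnd; fun_prop

end Rounding

section ThresholdStrategy

variable {n : ℕ} (θ : Fin n → ℝ)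

lemma prophetAux_of_le (t : Fin n → ℝ) {j : ℕ} (hj : n ≤ j) : prophetAux θ t j = 0 := by
  rw [prophetAux, dif_neg (not_lt.2 hj)]

lemma prophetAux_of_lt (t : Fin n → ℝ) {j : ℕ} (hj : j < n) :
    prophetAux θ t j = if j = n - 1 then t ⟨j, hj⟩
      else if θ ⟨j, hj⟩ ≤ t ⟨j, hj⟩ then t ⟨j, hj⟩ else prophetAux θ t (j + 1) := by
  rw [prophetAux, dif_pos hj]

lemma measurable_prophetAux (j : ℕ) : Measurable fun t : Fin n → ℝ => prophetAux θ t j := by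
  induction h : n - j generalizing j with
  | zero => simp only [prophetAux_of_le θ _ (show n ≤ j by omega), measurable_const]
  | succ k ih =>
    have hj : j < n := by omega
    simp only [prophetAux_of_lt θ _ hj]
    split_ifs
    · exact measurable_pi_apply _
    · exact Measurable.ite (measurableSet_le measurable_const (measurable_pi_apply _))
        (measurable_pi_apply _) (ih (j + 1) (by omega))

lemma prophetAux_mem {t : Fin n → ℝ} {S : Set ℝ} (h0 : (0 : ℝ) ∈ S) (ht : ∀ i, t i ∈ S)
    (j : ℕ) : prophetAux θ t j ∈ S := by
  fun_induction prophetAux θ t j <;> simp_all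

lemma prophetAux_le_of_le_of_accepts_iff {t' t : Fin n → ℝ} (hle : ∀ i, t' i ≤ t i)
    (hacc : ∀ i, θ i ≤ t' i ↔ θ i ≤ t i) (j : ℕ) : prophetAux θ t' j ≤ prophetAux θ t j := by
  induction h : n - j generalizing j with
  | zero => simp only [prophetAux_of_le θ _ (show n ≤ j by omega), le_refl]
  | succ k ih =>
    have hj : j < n := by omega
    rw [prophetAux_of_lt θ t' hj, prophetAux_of_lt θ t hj]
    simp only [hacc]
    split_ifs
    · exact hle _
    · exact hle _
    · exact ih (j + 1) (by omega)

lemma prophetReward_rnd_le {ε : ℝ} (hε : 0 < ε) (hθ : ∀ i, ∃ z : ℤ, θ i = z * (ε / 2))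
    (t : Fin n → ℝ) : prophetReward θ (fun i => rnd ε (t i)) ≤ prophetReward θ t :=
  prophetAux_le_of_le_of_accepts_iff θ (fun i => rnd_le hε (t i))
    (fun i => by obtain ⟨z, hz⟩ := hθ i; rw [hz, intCast_mul_le_rnd_iff hε]) 0

lemma integrable_prophetReward_comp {μ : Measure (Fin n → ℝ)} [IsFiniteMeasure μ]
    {f : (Fin n → ℝ) → Fin n → ℝ} (hf : Measurable f)
    (hf01 : ∀ᵐ t ∂μ, ∀ i, f t i ∈ Icc (0 : ℝ) 1) :
    Integrable (fun t => prophetReward θ (f t)) μ := by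
  refine .of_bound ((measurable_prophetAux θ 0).comp hf).aestronglyMeasurable 1 ?_
  filter_upwards [hf01] with t ht
  have h01 : prophetReward θ (f t) ∈ Icc (0 : ℝ) 1 :=
    prophetAux_mem θ (left_mem_Icc.2 zero_le_one) ht 0
  rw [Real.norm_of_nonneg h01.1]
  exact h01.2

end ThresholdStrategy

lemma ae_forall_mem_Icc_of_suppIn01 {n : ℕ} {D : Fin n → Measure ℝ} [∀ i, SigmaFinite (D i)]
    (hD : ∀ i, SuppIn01 (D i)) : ∀ᵐ t ∂Measure.pi D, ∀ i, t i ∈ Icc (0 : ℝ) 1 :=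
  ae_all_iff.2 fun i => Measure.pi_eval_preimage_null D (hD i)

theorem stmt14_general (n : ℕ) (ε : ℝ) (hε : ε ∈ Set.Ioo (0 : ℝ) 1)
    (θ : Fin n → ℝ)
    (hθmult : ∀ i, ∃ z : ℤ, θ i = z * (ε / 2))
    (D : Fin n → Measure ℝ) [∀ i, IsProbabilityMeasure (D i)]
    (hD : ∀ i, SuppIn01 (D i)) :
    ∫ t, prophetReward θ (fun i => rnd ε (t i)) ∂(Measure.pi D)
      ≤ ∫ t, prophetReward θ t ∂(Measure.pi D) := by
  have h01 := ae_forall_mem_Icc_of_suppIn01 hD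
  have hrnd01 : ∀ᵐ t ∂Measure.pi D, ∀ i, rnd ε (t i) ∈ Icc (0 : ℝ) 1 := by
    filter_upwards [h01] with t ht i using rnd_mem_Icc hε.1 (ht i)
  have hrnd : Measurable fun t : Fin n → ℝ => fun i => rnd ε (t i) :=
    measurable_pi_lambda _ fun i => (measurable_rnd ε).comp (measurable_pi_apply i)
  exact integral_mono (integrable_prophetReward_comp θ hrnd hrnd01)
    (integrable_prophetReward_comp θ measurable_id h01) (prophetReward_rnd_le θ hε.1 hθmult)

theorem stmt14 (n : ℕ) (ε : ℝ) (hε : ε ∈ Set.Ioo (0 : ℝ) 1)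
    (θ : Fin n → ℝ) (hθ01 : ∀ i, θ i ∈ Set.Icc (0 : ℝ) 1)
    (hθmult : ∀ i, ∃ z : ℤ, θ i = z * (ε / 2))
    (D : Fin n → Measure ℝ) [∀ i, IsProbabilityMeasure (D i)]
    (hD : ∀ i, SuppIn01 (D i)) :
    ∫ t, prophetReward θ (fun i => rnd ε (t i)) ∂(Measure.pi D)
      ≤ ∫ t, prophetReward θ t ∂(Measure.pi D) :=
  stmt14_general n ε hε θ hθmult D hD
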